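/- arXiv:2005.07499 — 3 statements merged into one kernel-verified Lean document; each statement's English description precedes it below -/
import Mathlib

section
/- Let A = P₁ − R₁ + S₁ = P₂ − R₂ + S₂ be two double proper splittings of A ∈ ℝ^{m×n} such that N(S₂) ⊇ N(P₂), R(S₂) ⊆ R(P₂), and I − S₂P₁† is nonsingular. Then the preconditioned matrix Â = (I − S₂P₁†)A satisfies Â = P̂ − R̂ + Ŝ with P̂ = P₂, R̂ = R₂ − S₂P₁†R₁, Ŝ = −S₂P₁†S₁, and this is a double proper splitting of Â, i.e. R(Â) = R(P̂) and N(Â) = N(P̂). -/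
/-!
Since `N(P₁) = N(A) = N(P₂) ⊆ N(S₂)` and `I - P₁†P₁` maps into `N(P₁)` (as `P₁P₁†P₁ = P₁`), we get
`S₂ P₁† P₁ = S₂`; substituting `A = P₁ - R₁ + S₁` into `S₂ P₁† A` gives the splitting of `Â`.
Multiplying by the invertible `U = I - S₂P₁†` does not change the null space of `A`, nor the
dimension of its range; and `U` maps `R(A)` into itself because `R(S₂) ⊆ R(P₂) = R(A)`,
so `R(Â) = R(A) = R(P₂)`.
-/

open Matrix

/-- Spectral radius of a real square matrix: the maximum modulus of its complex eigenvalues. -/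
noncomputable def specRad {ι : Type*} [Fintype ι] [DecidableEq ι] (M : Matrix ι ι ℝ) : ℝ :=
  sSup ((fun z : ℂ => ‖z‖) '' spectrum ℂ (M.map Complex.ofReal))

/-- `X` satisfies the four Penrose equations for `A`, i.e. `X` is the Moore-Penrose
inverse of `A`. -/
def IsMP {m n : ℕ} (A : Matrix (Fin m) (Fin n) ℝ) (X : Matrix (Fin n) (Fin m) ℝ) : Prop :=
  A * X * A = A ∧ X * A * X = X ∧ (A * X)ᵀ = A * X ∧ (X * A)ᵀ = X * A

/-- Entrywise comparison of matrices: `MatLE A B` means `A ≤ B` entrywise. -/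
def MatLE {m n : ℕ} (A B : Matrix (Fin m) (Fin n) ℝ) : Prop := ∀ i j, A i j ≤ B i j

namespace Matrix

variable {l m n k K : Type*} [Fintype m] [Fintype n]

theorem mul_mul_eq_of_mul_mul_eq_of_ker_le [CommRing K] {P : Matrix m n K} {X : Matrix n m K}
    {S : Matrix l n K} (hPXP : P * X * P = P)
    (hker : LinearMap.ker P.mulVecLin ≤ LinearMap.ker S.mulVecLin) : S * X * P = S := by
  rw [ext_iff_mulVec]
  intro v
  have hv : v - X *ᵥ (P *ᵥ v) ∈ LinearMap.ker P.mulVecLin := by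
    simp [mulVec_sub, mulVec_mulVec, ← Matrix.mul_assoc, hPXP]
  have hSv := hker hv
  simp only [LinearMap.mem_ker, mulVecLin_apply, mulVec_sub, sub_eq_zero] at hSv
  simp [← mulVec_mulVec, ← hSv]

variable [DecidableEq m]

theorem ker_mulVecLin_mul_of_isUnit [CommRing K] {U : Matrix m m K} (hU : IsUnit U)
    (A : Matrix m n K) : LinearMap.ker (U * A).mulVecLin = LinearMap.ker A.mulVecLin := by
  rw [mulVecLin_mul, LinearMap.ker_comp_of_ker_eq_bot]
  exact LinearMap.ker_eq_bot.mpr (mulVec_injective_of_isUnit hU)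

theorem range_mulVecLin_mul_of_isUnit_of_le [Field K] {U : Matrix m m K} (hU : IsUnit U)
    {A : Matrix m n K} (hle : LinearMap.range (U * A).mulVecLin ≤ LinearMap.range A.mulVecLin) :
    LinearMap.range (U * A).mulVecLin = LinearMap.range A.mulVecLin :=
  Submodule.eq_of_le_of_finrank_eq hle
    (rank_mul_eq_right_of_isUnit_det U A ((isUnit_iff_isUnit_det U).mp hU))

theorem range_mulVecLin_one_sub_mul_mul_le [Fintype k] [CommRing K] {S : Matrix m k K}
    {X : Matrix k m K} {A : Matrix m n K}
    (hS : LinearMap.range S.mulVecLin ≤ LinearMap.range A.mulVecLin) :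
    LinearMap.range ((1 - S * X) * A).mulVecLin ≤ LinearMap.range A.mulVecLin := by
  rintro _ ⟨v, rfl⟩
  simp only [mulVecLin_apply, sub_mulVec, one_mulVec, ← mulVec_mulVec]
  exact sub_mem ⟨v, rfl⟩ (hS ⟨_, rfl⟩)

end Matrix

theorem tgads_induced_double_proper_splitting_general {m n : ℕ}
    (A P₁ R₁ S₁ P₂ R₂ S₂ : Matrix (Fin m) (Fin n) ℝ)
    (X₁ : Matrix (Fin n) (Fin m) ℝ)
    (hX₁ : IsMP P₁ X₁)
    (hsplit₁ : A = P₁ - R₁ + S₁)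
    (hker₁ : LinearMap.ker (P₁).mulVecLin = LinearMap.ker (A).mulVecLin)
    (hsplit₂ : A = P₂ - R₂ + S₂)
    (hrange₂ : LinearMap.range (P₂).mulVecLin = LinearMap.range (A).mulVecLin)
    (hker₂ : LinearMap.ker (P₂).mulVecLin = LinearMap.ker (A).mulVecLin)
    (hNS : LinearMap.ker (P₂).mulVecLin ≤ LinearMap.ker (S₂).mulVecLin)
    (hRS : LinearMap.range (S₂).mulVecLin ≤ LinearMap.range (P₂).mulVecLin)
    (hunit : IsUnit (1 - S₂ * X₁))
    : ((1 - S₂ * X₁) * A = P₂ - (R₂ - S₂ * X₁ * R₁) + (-(S₂ * X₁ * S₁))) ∧ LinearMap.range ((1 - S₂ * X₁) * A).mulVecLin = LinearMap.range (P₂).mulVecLin ∧ LinearMap.ker ((1 - S₂ * X₁) * A).mulVecLin = LinearMap.ker (P₂).mulVecLin := by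
  have hS₂X₁P₁ : S₂ * X₁ * P₁ = S₂ :=
    mul_mul_eq_of_mul_mul_eq_of_ker_le hX₁.1 (hker₁ ▸ hker₂ ▸ hNS)
  refine ⟨?_, ?_, ?_⟩
  · have hS₂X₁A : S₂ * X₁ * A = S₂ - S₂ * X₁ * R₁ + S₂ * X₁ * S₁ := by
      rw [hsplit₁, Matrix.mul_add, Matrix.mul_sub, hS₂X₁P₁]
    rw [Matrix.sub_mul, Matrix.one_mul, hS₂X₁A]
    nth_rewrite 1 [hsplit₂]
    abel
  · rw [hrange₂]
    exact range_mulVecLin_mul_of_isUnit_of_le hunit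
      (range_mulVecLin_one_sub_mul_mul_le (hrange₂ ▸ hRS))
  · rw [hker₂]
    exact ker_mulVecLin_mul_of_isUnit hunit A

theorem tgads_induced_double_proper_splitting {m n : ℕ}
    (A P₁ R₁ S₁ P₂ R₂ S₂ : Matrix (Fin m) (Fin n) ℝ)
    (X₁ : Matrix (Fin n) (Fin m) ℝ)
    (hX₁ : IsMP P₁ X₁)
    (hsplit₁ : A = P₁ - R₁ + S₁)
    (hrange₁ : LinearMap.range (P₁).mulVecLin = LinearMap.range (A).mulVecLin)
    (hker₁ : LinearMap.ker (P₁).mulVecLin = LinearMap.ker (A).mulVecLin)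
    (hsplit₂ : A = P₂ - R₂ + S₂)
    (hrange₂ : LinearMap.range (P₂).mulVecLin = LinearMap.range (A).mulVecLin)
    (hker₂ : LinearMap.ker (P₂).mulVecLin = LinearMap.ker (A).mulVecLin)
    (hNS : LinearMap.ker (P₂).mulVecLin ≤ LinearMap.ker (S₂).mulVecLin)
    (hRS : LinearMap.range (S₂).mulVecLin ≤ LinearMap.range (P₂).mulVecLin)
    (hunit : IsUnit (1 - S₂ * X₁))
    : ((1 - S₂ * X₁) * A = P₂ - (R₂ - S₂ * X₁ * R₁) + (-(S₂ * X₁ * S₁))) ∧ LinearMap.range ((1 - S₂ * X₁) * A).mulVecLin = LinearMap.range (P₂).mulVecLin ∧ LinearMap.ker ((1 - S₂ * X₁) * A).mulVecLin = LinearMap.ker (P₂).mulVecLin :=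
  tgads_induced_double_proper_splitting_general A P₁ R₁ S₁ P₂ R₂ S₂ X₁ hX₁ hsplit₁ hker₁ hsplit₂
    hrange₂ hker₂ hNS hRS hunit
end

section
/- Let A = P₁ − R₁ + S₁ = P₂ − R₂ + S₂ be two double proper weak regular splittings of a semi-monotone matrix A ∈ ℝ^{m×n}. If N(S₂) ⊇ N(P₂), R(S₂) ⊆ R(P₂), I − S₂P₁† is nonsingular, and Â† ≥ 0 where Â = (I − S₂P₁†)A, then ρ(W₁₂) < 1. -/
open Matrix

/-!
The blocks `B = P₂†R₂ - P₂†S₂P₁†R₁` and `C = P₂†S₂P₁†S₁` of `W₁₂` are entrywise nonnegative, and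
since `N(P₁) = N(P₂) ⊆ N(S₂)` gives `S₂P₁†P₁ = S₂`, their sum is `P₂†P₂ - P₂†Â`. The matrix `Â`
has the same null space and range as `P₂`, so `P₂†P₂ = Â†Â` and `P₂P₂† = ÂÂ†`; with `Â† ≥ 0` and
`P₂† ≥ 0` this yields a positive vector `u` with `(B + C)u < u`. An eigenvector `(x, w)` of `W₁₂`
for `λ` has `x = λw` and `(λB + C)w = λ²w`, so `|λ| ≥ 1` would force `|λ||w| ≤ (B + C)|w|`,
which the subinvariant vector `u` rules out.
-/

section GeneralizedInverse

variable {R : Type*} [CommRing R] {k l o : Type*} [Fintype k] [Fintype l]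

theorem Matrix.mul_mul_eq_of_ker_le {M : Matrix k l R} {X : Matrix l k R} {N : Matrix o l R}
    (hM : M * X * M = M) (hker : LinearMap.ker M.mulVecLin ≤ LinearMap.ker N.mulVecLin) :
    N * X * M = N := by
  refine ext_iff_mulVec.2 fun v => ?_
  have hv : v - (X * M) *ᵥ v ∈ LinearMap.ker M.mulVecLin := by
    rw [LinearMap.mem_ker, mulVecLin_apply, mulVec_sub, mulVec_mulVec, ← Matrix.mul_assoc, hM,
      sub_self]
  have hNv := hker hv
  rwa [LinearMap.mem_ker, mulVecLin_apply, mulVec_sub, mulVec_mulVec, ← Matrix.mul_assoc,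
    sub_eq_zero, eq_comm] at hNv

theorem Matrix.mul_mul_eq_of_range_le [Fintype o] {M : Matrix k l R} {X : Matrix l k R}
    {N : Matrix k o R}
    (hM : M * X * M = M) (hrange : LinearMap.range N.mulVecLin ≤ LinearMap.range M.mulVecLin) :
    M * X * N = N := by
  refine ext_iff_mulVec.2 fun v => ?_
  obtain ⟨w, hw⟩ := hrange ⟨v, rfl⟩
  change M *ᵥ w = N *ᵥ v at hw
  rw [← mulVec_mulVec, ← hw, mulVec_mulVec, hM]

theorem Matrix.range_mulVecLin_one_sub_mul_mul_le_s1 [Fintype o] [DecidableEq k] {S : Matrix k o R}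
    {X : Matrix o k R} {A : Matrix k l R}
    (hS : LinearMap.range S.mulVecLin ≤ LinearMap.range A.mulVecLin) :
    LinearMap.range ((1 - S * X) * A).mulVecLin ≤ LinearMap.range A.mulVecLin := by
  rintro _ ⟨v, rfl⟩
  rw [mulVecLin_apply, Matrix.sub_mul, Matrix.one_mul, sub_mulVec, Matrix.mul_assoc,
    ← mulVec_mulVec]
  exact sub_mem ⟨v, rfl⟩ (hS ⟨_, rfl⟩)

end GeneralizedInverse

section Invertible

variable {K : Type*} [Field K] {k l : Type*} [Fintype k] [DecidableEq k] [Fintype l]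
  {U : Matrix k k K}

theorem Matrix.ker_mulVecLin_mul_of_isUnit_s1 (hU : IsUnit U) (M : Matrix k l K) :
    LinearMap.ker (U * M).mulVecLin = LinearMap.ker M.mulVecLin := by
  rw [mulVecLin_mul, LinearMap.ker_comp_of_ker_eq_bot]
  exact LinearMap.ker_eq_bot.2 (mulVec_injective_iff_isUnit.2 hU)

theorem Matrix.range_mulVecLin_mul_of_isUnit_of_le_s1 (hU : IsUnit U) {M : Matrix k l K}
    (hle : LinearMap.range (U * M).mulVecLin ≤ LinearMap.range M.mulVecLin) :
    LinearMap.range (U * M).mulVecLin = LinearMap.range M.mulVecLin :=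
  Submodule.eq_of_le_of_finrank_eq hle
    (rank_mul_eq_right_of_isUnit_det U M ((isUnit_iff_isUnit_det U).1 hU))

end Invertible

namespace IsMP

variable {m n : ℕ} {M N : Matrix (Fin m) (Fin n) ℝ} {X Y : Matrix (Fin n) (Fin m) ℝ}

theorem mul_eq_mul_of_ker_eq (hX : IsMP M X) (hY : IsMP N Y)
    (hker : LinearMap.ker M.mulVecLin = LinearMap.ker N.mulVecLin) : X * M = Y * N := by
  have hXY : X * M * (Y * N) = X * M := by
    rw [Matrix.mul_assoc X, ← Matrix.mul_assoc M, mul_mul_eq_of_ker_le hY.1 hker.ge]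
  have hYX : Y * N * (X * M) = Y * N := by
    rw [Matrix.mul_assoc Y, ← Matrix.mul_assoc N, mul_mul_eq_of_ker_le hX.1 hker.le]
  calc X * M = (X * M * (Y * N))ᵀ := by rw [hXY, hX.2.2.2]
    _ = Y * N := by rw [transpose_mul, hX.2.2.2, hY.2.2.2, hYX]

theorem mul_eq_mul_of_range_eq (hX : IsMP M X) (hY : IsMP N Y)
    (hrange : LinearMap.range M.mulVecLin = LinearMap.range N.mulVecLin) : M * X = N * Y := by
  have hXY : M * X * (N * Y) = N * Y := by
    rw [← Matrix.mul_assoc, mul_mul_eq_of_range_le hX.1 hrange.ge]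
  have hYX : N * Y * (M * X) = M * X := by
    rw [← Matrix.mul_assoc, mul_mul_eq_of_range_le hY.1 hrange.le]
  calc M * X = (N * Y * (M * X))ᵀ := by rw [hYX, hX.2.2.1]
    _ = N * Y := by rw [transpose_mul, hX.2.2.1, hY.2.2.1, hXY]

end IsMP

section Nonneg

variable {ι κ : Type*} [Fintype ι] {T : Matrix κ ι ℝ}

theorem Matrix.mulVec_mono_of_nonneg (hT : ∀ i j, 0 ≤ T i j) {v w : ι → ℝ} (h : v ≤ w) :
    T *ᵥ v ≤ T *ᵥ w :=
  fun i => Finset.sum_le_sum fun j _ => mul_le_mul_of_nonneg_left (h j) (hT i j)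

theorem Matrix.mulVec_nonneg_of_nonneg (hT : ∀ i j, 0 ≤ T i j) {v : ι → ℝ} (hv : 0 ≤ v) :
    0 ≤ T *ᵥ v := by
  simpa using mulVec_mono_of_nonneg hT hv

end Nonneg

namespace MatLE

variable {k l o : ℕ} {U : Matrix (Fin k) (Fin l) ℝ} {V : Matrix (Fin l) (Fin o) ℝ}

theorem mul_nonneg_of_nonpos_of_nonpos (hU : MatLE U 0) (hV : MatLE V 0) : MatLE 0 (U * V) :=
  fun i j => show (0 : ℝ) ≤ ∑ r, U i r * V r j from
    Finset.sum_nonneg fun r _ => _root_.mul_nonneg_of_nonpos_of_nonpos (hU i r) (hV r j)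

theorem mul_nonpos_of_nonpos_of_nonneg (hU : MatLE U 0) (hV : MatLE 0 V) : MatLE (U * V) 0 :=
  fun i j => show ∑ r, U i r * V r j ≤ (0 : ℝ) from
    Finset.sum_nonpos fun r _ => _root_.mul_nonpos_of_nonpos_of_nonneg (hU i r) (hV r j)

end MatLE

theorem exists_pos_mulVec_lt_of_mul_eq_mul {m n : ℕ} {Y Z : Matrix (Fin n) (Fin m) ℝ}
    {P Q : Matrix (Fin m) (Fin n) ℝ} (hYP : Y * P = Z * Q) (hZ : Z * Q * Z = Z)
    (hY : Y * Q * Z = Y) (hY0 : MatLE 0 Y) (hZ0 : MatLE 0 Z) :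
    ∃ u : Fin n → ℝ, (∀ i, 0 < u i) ∧ ∀ i, ((Y * P - Y * Q) *ᵥ u) i < u i := by
  set c : Fin m → ℝ := P *ᵥ 1 ⊔ Q *ᵥ 1
  have hYc : 0 ≤ Y *ᵥ (c - P *ᵥ 1) := mulVec_nonneg_of_nonneg hY0 (sub_nonneg.2 le_sup_left)
  have hZc : 0 ≤ Z *ᵥ (c - Q *ᵥ 1) := mulVec_nonneg_of_nonneg hZ0 (sub_nonneg.2 le_sup_right)
  have hTZ : (Y * P - Y * Q) * Z = Z - Y := by
    rw [Matrix.sub_mul, hYP, hZ, hY]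
  refine ⟨1 + Z *ᵥ (c - Q *ᵥ 1), fun i => add_pos_of_pos_of_nonneg one_pos (hZc i), fun i => ?_⟩
  -- `u - (YP - YQ)u = 1 + Y(c - P1)` and `Y ≥ 0`, `c ≥ P1`.
  have hYP1 : Y *ᵥ (P *ᵥ 1) = Z *ᵥ (Q *ᵥ 1) := by rw [mulVec_mulVec, mulVec_mulVec, hYP]
  have hTu : (Y * P - Y * Q) *ᵥ (1 + Z *ᵥ (c - Q *ᵥ 1)) = Z *ᵥ c - Y *ᵥ c := by
    rw [mulVec_add, mulVec_mulVec, hTZ]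
    simp only [sub_mulVec, mulVec_sub, ← mulVec_mulVec, hYP1]
    abel
  have hYci := hYc i
  rw [hTu]
  simp only [mulVec_sub, hYP1, Pi.sub_apply, Pi.add_apply, Pi.zero_apply, Pi.one_apply] at hYci ⊢
  linarith

theorem double_splitting_blocks_sum_eq {m n : ℕ} {A P₁ R₁ S₁ P₂ R₂ S₂ : Matrix (Fin m) (Fin n) ℝ}
    {X₁ X₂ : Matrix (Fin n) (Fin m) ℝ} (hsplit₁ : A = P₁ - R₁ + S₁) (hsplit₂ : A = P₂ - R₂ + S₂)
    (hS₂ : S₂ * X₁ * P₁ = S₂) :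
    X₂ * R₂ - X₂ * S₂ * X₁ * R₁ + X₂ * S₂ * X₁ * S₁ = X₂ * P₂ - X₂ * ((1 - S₂ * X₁) * A) := by
  obtain rfl : R₁ = P₁ + S₁ - A := by rw [hsplit₁]; abel
  obtain rfl : R₂ = P₂ + S₂ - A := by rw [hsplit₂]; abel
  rw [Matrix.mul_assoc] at hS₂
  simp only [Matrix.mul_sub, Matrix.sub_mul, Matrix.mul_add, Matrix.one_mul, Matrix.mul_assoc, hS₂]
  abel

section Spectral

variable {ι : Type*} [Fintype ι]

theorem lt_one_of_smul_le_mulVec {T : Matrix ι ι ℝ} (hT : ∀ i j, 0 ≤ T i j) {u : ι → ℝ}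
    (hu : ∀ i, 0 < u i) (hTu : ∀ i, (T *ᵥ u) i < u i) {y : ι → ℝ} (hy : 0 ≤ y) (hy0 : y ≠ 0)
    {r : ℝ} (hr : r • y ≤ T *ᵥ y) : r < 1 := by
  obtain ⟨j, hj⟩ := Function.ne_iff.1 hy0
  obtain ⟨i, -, hi⟩ :=
    Finset.exists_max_image Finset.univ (fun k => y k / u k) ⟨j, Finset.mem_univ j⟩
  set t := y i / u i
  have hyt : y ≤ t • u := fun k => (div_le_iff₀ (hu k)).1 (hi k (Finset.mem_univ k))
  have hyi : 0 < y i :=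
    (div_pos_iff_of_pos_right (hu i)).1 <|
      (div_pos ((hy j).lt_of_ne' hj) (hu j)).trans_le (hi j (Finset.mem_univ j))
  have hTy : (T *ᵥ y) i ≤ t * (T *ᵥ u) i := by
    simpa [mulVec_smul] using mulVec_mono_of_nonneg hT hyt i
  have : r * y i < 1 * y i :=
    calc r * y i ≤ (T *ᵥ y) i := hr i
      _ ≤ t * (T *ᵥ u) i := hTy
      _ < t * u i := mul_lt_mul_of_pos_left (hTu i) (div_pos hyi (hu i))
      _ = 1 * y i := by rw [one_mul, div_mul_cancel₀ _ (hu i).ne']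
  exact lt_of_mul_lt_mul_right this hyi.le

theorem norm_map_ofReal_mulVec_apply_le {κ : Type*} {M : Matrix κ ι ℝ} (hM : ∀ i j, 0 ≤ M i j)
    (w : ι → ℂ) (i : κ) : ‖(M.map Complex.ofReal *ᵥ w) i‖ ≤ (M *ᵥ fun j => ‖w j‖) i :=
  (norm_sum_le _ _).trans_eq <| Finset.sum_congr rfl fun j _ => by
    simp only [map_apply, norm_mul, Complex.norm_real, Real.norm_of_nonneg (hM i j)]

theorem Matrix.exists_mulVec_eq_smul_of_mem_spectrum {K : Type*} [Field K] [DecidableEq ι]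
    {M : Matrix ι ι K} {z : K} (hz : z ∈ spectrum K M) : ∃ v ≠ 0, M *ᵥ v = z • v := by
  rw [← spectrum_toLin'] at hz
  obtain ⟨v, hv, hv0⟩ := (Module.End.hasEigenvalue_iff_mem_spectrum.2 hz).exists_hasEigenvector
  exact ⟨v, hv0, Module.End.mem_eigenspace_iff.1 hv⟩

theorem specRad_lt_one_of_forall_norm_lt_one [DecidableEq ι] {M : Matrix ι ι ℝ}
    (h : ∀ z ∈ spectrum ℂ (M.map Complex.ofReal), ‖z‖ < 1) : specRad M < 1 := by
  rcases ((fun z : ℂ => ‖z‖) '' spectrum ℂ (M.map Complex.ofReal)).eq_empty_or_nonempty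
    with he | hne
  · rw [specRad, he, Real.sSup_empty]
    exact one_pos
  · rw [specRad, ((finite_spectrum _).image _).csSup_lt_iff hne]
    rintro _ ⟨z, hz, rfl⟩
    exact h z hz

theorem norm_lt_one_of_fromBlocks_mulVec_eq_smul [DecidableEq ι] {B C : Matrix ι ι ℝ}
    (hB : ∀ i j, 0 ≤ B i j) (hC : ∀ i j, 0 ≤ C i j) {u : ι → ℝ} (hu : ∀ i, 0 < u i)
    (hBCu : ∀ i, ((B + C) *ᵥ u) i < u i) {z : ℂ} {v : ι ⊕ ι → ℂ} (hv : v ≠ 0)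
    (hWv : (fromBlocks B C 1 0).map Complex.ofReal *ᵥ v = z • v) : ‖z‖ < 1 := by
  by_contra! hz
  obtain ⟨x, w, rfl⟩ : ∃ x w, v = Sum.elim x w := ⟨_, _, (Sum.elim_comp_inl_inr v).symm⟩
  rw [fromBlocks_map, Matrix.map_one _ Complex.ofReal_zero Complex.ofReal_one,
    Matrix.map_zero _ Complex.ofReal_zero, fromBlocks_mulVec] at hWv
  obtain rfl : x = z • w := funext fun i => by simpa using congrFun hWv (Sum.inr i)
  have hw : w ≠ 0 := by rintro rfl; simp at hv
  have hzw : ∀ i, z * (B.map Complex.ofReal *ᵥ w) i + (C.map Complex.ofReal *ᵥ w) i =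
      z * (z * w i) := fun i => by simpa [mulVec_smul] using congrFun hWv (Sum.inl i)
  set y : ι → ℝ := fun i => ‖w i‖
  have hy : y ≠ 0 := fun h => hw (funext fun i => norm_eq_zero.1 (congrFun h i))
  have key : ‖z‖ • y ≤ (B + C) *ᵥ y := by
    intro i
    have hBw := norm_map_ofReal_mulVec_apply_le hB w i
    have hCw := norm_map_ofReal_mulVec_apply_le hC w i
    have hCy : 0 ≤ (C *ᵥ y) i := mulVec_nonneg_of_nonneg hC (fun j => norm_nonneg (w j)) i
    have : ‖z‖ * (‖z‖ * y i) ≤ ‖z‖ * ((B + C) *ᵥ y) i :=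
      calc ‖z‖ * (‖z‖ * y i)
          = ‖z * (B.map Complex.ofReal *ᵥ w) i + (C.map Complex.ofReal *ᵥ w) i‖ := by
            rw [hzw, norm_mul, norm_mul]
        _ ≤ ‖z‖ * ‖(B.map Complex.ofReal *ᵥ w) i‖ + ‖(C.map Complex.ofReal *ᵥ w) i‖ :=
            (norm_add_le _ _).trans_eq (by rw [norm_mul])
        _ ≤ ‖z‖ * (B *ᵥ y) i + ‖z‖ * (C *ᵥ y) i :=
            add_le_add (mul_le_mul_of_nonneg_left hBw (norm_nonneg z))
              (hCw.trans (le_mul_of_one_le_left hCy hz))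
        _ = ‖z‖ * ((B + C) *ᵥ y) i := by rw [add_mulVec, Pi.add_apply, mul_add]
    exact le_of_mul_le_mul_left this (one_pos.trans_le hz)
  exact (lt_one_of_smul_le_mulVec (fun i j => add_nonneg (hB i j) (hC i j)) hu hBCu
    (fun i => norm_nonneg _) hy key).not_ge hz

theorem specRad_fromBlocks_lt_one [DecidableEq ι] {B C : Matrix ι ι ℝ}
    (hB : ∀ i j, 0 ≤ B i j) (hC : ∀ i j, 0 ≤ C i j) {u : ι → ℝ} (hu : ∀ i, 0 < u i)
    (hBCu : ∀ i, ((B + C) *ᵥ u) i < u i) : specRad (fromBlocks B C 1 0) < 1 :=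
  specRad_lt_one_of_forall_norm_lt_one fun _ hz =>
    let ⟨_, hv, hWv⟩ := exists_mulVec_eq_smul_of_mem_spectrum hz
    norm_lt_one_of_fromBlocks_mulVec_eq_smul hB hC hu hBCu hv hWv

end Spectral

theorem tgads_convergence_weak_regular_general {m n : ℕ}
    (A P₁ R₁ S₁ P₂ R₂ S₂ : Matrix (Fin m) (Fin n) ℝ)
    (X₁ X₂ Xhat : Matrix (Fin n) (Fin m) ℝ)
    (hX₁ : IsMP P₁ X₁)
    (hX₂ : IsMP P₂ X₂)
    (hsplit₁ : A = P₁ - R₁ + S₁)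
    (hker₁ : LinearMap.ker (P₁).mulVecLin = LinearMap.ker (A).mulVecLin)
    (hwr₁b : MatLE 0 (X₁ * R₁))
    (hwr₁c : MatLE (X₁ * S₁) 0)
    (hsplit₂ : A = P₂ - R₂ + S₂)
    (hrange₂ : LinearMap.range (P₂).mulVecLin = LinearMap.range (A).mulVecLin)
    (hker₂ : LinearMap.ker (P₂).mulVecLin = LinearMap.ker (A).mulVecLin)
    (hwr₂a : MatLE 0 X₂)
    (hwr₂b : MatLE 0 (X₂ * R₂))
    (hwr₂c : MatLE (X₂ * S₂) 0)
    (hNS : LinearMap.ker (P₂).mulVecLin ≤ LinearMap.ker (S₂).mulVecLin)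
    (hRS : LinearMap.range (S₂).mulVecLin ≤ LinearMap.range (P₂).mulVecLin)
    (hunit : IsUnit (1 - S₂ * X₁))
    (hXhat : IsMP ((1 - S₂ * X₁) * A) Xhat)
    (hXhatpos : MatLE 0 Xhat)
    : specRad (Matrix.fromBlocks (X₂ * R₂ - X₂ * S₂ * X₁ * R₁) (X₂ * S₂ * X₁ * S₁) 1 0) < 1 := by
  set Â := (1 - S₂ * X₁) * A
  have hkerÂ : LinearMap.ker Â.mulVecLin = LinearMap.ker A.mulVecLin :=
    ker_mulVecLin_mul_of_isUnit_s1 hunit A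
  have hrangeÂ : LinearMap.range Â.mulVecLin = LinearMap.range A.mulVecLin :=
    range_mulVecLin_mul_of_isUnit_of_le_s1 hunit (range_mulVecLin_one_sub_mul_mul_le_s1 (hrange₂ ▸ hRS))
  have hS₂ : S₂ * X₁ * P₁ = S₂ := mul_mul_eq_of_ker_le hX₁.1 ((hker₁.trans hker₂.symm).le.trans hNS)
  have hXP : X₂ * P₂ = Xhat * Â := hX₂.mul_eq_mul_of_ker_eq hXhat (hker₂.trans hkerÂ.symm)
  have hPX : P₂ * X₂ = Â * Xhat := hX₂.mul_eq_mul_of_range_eq hXhat (hrange₂.trans hrangeÂ.symm)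
  obtain ⟨u, hu, hTu⟩ := exists_pos_mulVec_lt_of_mul_eq_mul hXP hXhat.2.1
    (by rw [Matrix.mul_assoc, ← hPX, ← Matrix.mul_assoc, hX₂.2.1]) hwr₂a hXhatpos
  have hB : MatLE 0 (X₂ * R₂ - X₂ * S₂ * X₁ * R₁) := fun i j => by
    have hR : (0 : ℝ) ≤ (X₂ * R₂) i j := hwr₂b i j
    have hSR := hwr₂c.mul_nonpos_of_nonpos_of_nonneg hwr₁b i j
    simp only [Matrix.mul_assoc, Matrix.sub_apply, Matrix.zero_apply] at hSR ⊢
    linarith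
  have hC : MatLE 0 (X₂ * S₂ * X₁ * S₁) := by
    simpa only [Matrix.mul_assoc] using hwr₂c.mul_nonneg_of_nonpos_of_nonpos hwr₁c
  refine specRad_fromBlocks_lt_one hB hC hu ?_
  rwa [double_splitting_blocks_sum_eq hsplit₁ hsplit₂ hS₂]

theorem tgads_convergence_weak_regular {m n : ℕ}
    (A P₁ R₁ S₁ P₂ R₂ S₂ : Matrix (Fin m) (Fin n) ℝ)
    (XA X₁ X₂ Xhat : Matrix (Fin n) (Fin m) ℝ)
    (hX₁ : IsMP P₁ X₁)
    (hX₂ : IsMP P₂ X₂)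
    (hXA : IsMP A XA)
    (hsemi : MatLE 0 XA)
    (hsplit₁ : A = P₁ - R₁ + S₁)
    (hrange₁ : LinearMap.range (P₁).mulVecLin = LinearMap.range (A).mulVecLin)
    (hker₁ : LinearMap.ker (P₁).mulVecLin = LinearMap.ker (A).mulVecLin)
    (hwr₁a : MatLE 0 X₁)
    (hwr₁b : MatLE 0 (X₁ * R₁))
    (hwr₁c : MatLE (X₁ * S₁) 0)
    (hsplit₂ : A = P₂ - R₂ + S₂)
    (hrange₂ : LinearMap.range (P₂).mulVecLin = LinearMap.range (A).mulVecLin)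
    (hker₂ : LinearMap.ker (P₂).mulVecLin = LinearMap.ker (A).mulVecLin)
    (hwr₂a : MatLE 0 X₂)
    (hwr₂b : MatLE 0 (X₂ * R₂))
    (hwr₂c : MatLE (X₂ * S₂) 0)
    (hNS : LinearMap.ker (P₂).mulVecLin ≤ LinearMap.ker (S₂).mulVecLin)
    (hRS : LinearMap.range (S₂).mulVecLin ≤ LinearMap.range (P₂).mulVecLin)
    (hunit : IsUnit (1 - S₂ * X₁))
    (hXhat : IsMP ((1 - S₂ * X₁) * A) Xhat)
    (hXhatpos : MatLE 0 Xhat)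
    : specRad (Matrix.fromBlocks (X₂ * R₂ - X₂ * S₂ * X₁ * R₁) (X₂ * S₂ * X₁ * S₁) 1 0) < 1 :=
  tgads_convergence_weak_regular_general A P₁ R₁ S₁ P₂ R₂ S₂ X₁ X₂ Xhat hX₁ hX₂ hsplit₁ hker₁ hwr₁b
    hwr₁c hsplit₂ hrange₂ hker₂ hwr₂a hwr₂b hwr₂c hNS hRS hunit hXhat hXhatpos
end

section
/- Let A = P₁ − R₁ + S₁ be a double proper weak regular splitting and A = P₂ − R₂ + S₂ be a double proper regular splitting of a semi-monotone matrix A ∈ ℝ^{m×n}. Suppose N(S₂) ⊇ N(P₂), R(S₂) ⊆ R(P₂), I − S₂P₁† is nonsingular, and Â† ≥ 0 where Â = (I − S₂P₁†)A. If P₁†R₁ ≥ P₂†R₂ and P₂†S₂ ≥ P₁†S₁, then ρ(W₁₂) ≤ ρ(T₁) < 1, where T₁ is the iteration matrix of the splitting A = P₁ − R₁ + S₁. -/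
/-!
Both claims are comparison arguments for nonnegative block matrices `[[H, K], [I, 0]]`.

`ρ(T₁) < 1`: a left eigenvector `(v₁, v₂)` of `T₁` for an eigenvalue `z` with `|z| ≥ 1` gives
`w = |v₁| ≥ 0` with `w ≤ w P₁†(R₁ - S₁) = w P₁†(P₁ - A)`. Since the splitting is proper,
`A A† = P₁ P₁†` and `A† A = P₁† P₁`, so multiplying by `A† ≥ 0` on the right turns this into
`w P₁† ≤ 0`; hence `w P₁† = 0`, then `w = 0`, and finally `v = 0`.

`ρ(W₁₂) ≤ ρ(T₁)`: with `M = -P₂†S₂` we have `W₁₂ = [[P₂†R₂ + M P₁†R₁, M (-P₁†S₁)], [I, 0]]`,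
where `0 ≤ P₂†R₂ ≤ P₁†R₁` and `0 ≤ M ≤ -P₁†S₁`. For `ρ(T₁) < c ≤ 1`, Gelfand's formula gives a
positive vector `u` with `T₁ u ≤ c u`; then also `W₁₂ u ≤ c u`, and the Collatz–Wielandt bound
yields `ρ(W₁₂) ≤ c`.
-/

open Matrix

namespace Matrix

section Nonneg

variable {ι κ : Type*} {M N : Matrix ι κ ℝ}

lemma mulVec_nonneg_of_nonneg_s4 [Fintype κ] (hM : ∀ i j, 0 ≤ M i j) {v : κ → ℝ} (hv : 0 ≤ v) :
    0 ≤ M *ᵥ v :=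
  fun i => dotProduct_nonneg_of_nonneg (hM i) hv

lemma mulVec_le_mulVec_of_nonneg [Fintype κ] (hM : ∀ i j, 0 ≤ M i j) {v w : κ → ℝ}
    (hvw : v ≤ w) : M *ᵥ v ≤ M *ᵥ w :=
  fun i => dotProduct_le_dotProduct_of_nonneg_left hvw (hM i)

lemma mulVec_le_mulVec_of_le [Fintype κ] (hMN : ∀ i j, M i j ≤ N i j) {v : κ → ℝ}
    (hv : 0 ≤ v) : M *ᵥ v ≤ N *ᵥ v :=
  fun i => dotProduct_le_dotProduct_of_nonneg_right (hMN i) hv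

lemma vecMul_nonneg_of_nonneg [Fintype ι] (hM : ∀ i j, 0 ≤ M i j) {v : ι → ℝ} (hv : 0 ≤ v) :
    0 ≤ v ᵥ* M :=
  fun j => dotProduct_nonneg_of_nonneg hv (fun i => hM i j)

lemma vecMul_le_vecMul_of_nonneg [Fintype ι] (hM : ∀ i j, 0 ≤ M i j) {v w : ι → ℝ}
    (hvw : v ≤ w) : v ᵥ* M ≤ w ᵥ* M :=
  fun j => dotProduct_le_dotProduct_of_nonneg_right hvw (fun i => hM i j)

lemma mul_nonneg_of_nonneg [Fintype κ] {ο : Type*} {B : Matrix κ ο ℝ}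
    (hM : ∀ i j, 0 ≤ M i j) (hB : ∀ i j, 0 ≤ B i j) (i : ι) (j : ο) : 0 ≤ (M * B) i j :=
  dotProduct_nonneg_of_nonneg (hM i) (fun k => hB k j)

lemma norm_vecMul_map_ofReal_le [Fintype ι] (hM : ∀ i j, 0 ≤ M i j) (v : ι → ℂ) (j : κ) :
    ‖(v ᵥ* M.map Complex.ofReal) j‖ ≤ ((‖v ·‖) ᵥ* M) j := by
  refine (norm_sum_le _ _).trans_eq (Finset.sum_congr rfl fun i _ => ?_)
  simp [abs_of_nonneg (hM i j)]

end Nonneg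

section SpectralRadius

variable {ι : Type*} [Fintype ι] [DecidableEq ι]

lemma specRad_nonneg (M : Matrix ι ι ℝ) : 0 ≤ specRad M :=
  Real.sSup_nonneg <| by rintro _ ⟨z, -, rfl⟩; exact norm_nonneg z

lemma specRad_lt_of_forall_norm_lt {M : Matrix ι ι ℝ} {c : ℝ} (hc : 0 < c)
    (h : ∀ z ∈ spectrum ℂ (M.map Complex.ofReal), ‖z‖ < c) : specRad M < c := by
  rcases ((fun z : ℂ => ‖z‖) '' spectrum ℂ (M.map Complex.ofReal)).eq_empty_or_nonempty
    with hempty | hne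
  · rwa [specRad, hempty, Real.sSup_empty]
  · rw [specRad, ((Matrix.finite_spectrum _).image _).csSup_lt_iff hne]
    rintro _ ⟨z, hz, rfl⟩
    exact h z hz

lemma spectralRadius_map_ofReal_le (M : Matrix ι ι ℝ) :
    spectralRadius ℂ (M.map Complex.ofReal) ≤ ENNReal.ofReal (specRad M) :=
  iSup₂_le fun z hz => (ofReal_norm z).ge.trans <| ENNReal.ofReal_le_ofReal <|
    le_csSup ((Matrix.finite_spectrum _).image _).bddAbove ⟨z, hz, rfl⟩

lemma exists_vecMul_eq_smul_of_mem_spectrum {K : Type*} [Field K] {M : Matrix ι ι K} {z : K}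
    (hz : z ∈ spectrum K M) : ∃ v ≠ 0, v ᵥ* M = z • v := by
  rw [spectrum.mem_iff, Matrix.isUnit_iff_isUnit_det, isUnit_iff_ne_zero, not_not] at hz
  obtain ⟨v, hv0, hv⟩ := Matrix.exists_vecMul_eq_zero_iff.mpr hz
  refine ⟨v, hv0, ?_⟩
  rwa [vecMul_sub, Algebra.algebraMap_eq_smul_one, vecMul_smul, vecMul_one, sub_eq_zero,
    eq_comm] at hv

lemma specRad_le_of_mulVec_le_smul {T : Matrix ι ι ℝ} (hT : ∀ i j, 0 ≤ T i j) {u : ι → ℝ}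
    (hu : ∀ i, 0 < u i) {c : ℝ} (hc : 0 ≤ c) (hTu : T *ᵥ u ≤ c • u) : specRad T ≤ c := by
  refine Real.sSup_le ?_ hc
  rintro _ ⟨z, hz, rfl⟩
  obtain ⟨v, hv0, hv⟩ := exists_vecMul_eq_smul_of_mem_spectrum hz
  set w : ι → ℝ := (‖v ·‖)
  have hw : 0 ≤ w := fun i => norm_nonneg _
  have hzw : ‖z‖ • w ≤ w ᵥ* T := fun j => by
    simpa [hv, w] using norm_vecMul_map_ofReal_le hT v j
  have hwu : 0 < w ⬝ᵥ u := by
    obtain ⟨i, hi⟩ := Function.ne_iff.mp hv0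
    exact Finset.sum_pos' (fun i _ => mul_nonneg (hw i) (hu i).le)
      ⟨i, Finset.mem_univ _, mul_pos (norm_pos_iff.mpr hi) (hu i)⟩
  refine le_of_mul_le_mul_right ?_ hwu
  calc ‖z‖ * (w ⬝ᵥ u) = (‖z‖ • w) ⬝ᵥ u := by rw [smul_dotProduct, smul_eq_mul]
    _ ≤ (w ᵥ* T) ⬝ᵥ u := dotProduct_le_dotProduct_of_nonneg_right hzw fun i => (hu i).le
    _ = w ⬝ᵥ (T *ᵥ u) := (dotProduct_mulVec _ _ _).symm
    _ ≤ w ⬝ᵥ (c • u) := dotProduct_le_dotProduct_of_nonneg_left hTu hw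
    _ = c * (w ⬝ᵥ u) := by rw [dotProduct_smul, smul_eq_mul]

lemma pow_nonneg_of_nonneg {T : Matrix ι ι ℝ} (hT : ∀ i j, 0 ≤ T i j) (k : ℕ) (i j : ι) :
    0 ≤ (T ^ k) i j := by
  induction k generalizing i j with
  | zero => rw [pow_zero, one_apply]; split_ifs <;> norm_num
  | succ k ih => rw [pow_succ]; exact mul_nonneg_of_nonneg ih hT i j

lemma exists_pow_rowSum_le_of_specRad_lt {T : Matrix ι ι ℝ} {c : ℝ} (hc : specRad T < c) :
    ∃ k ≠ 0, ∀ i, ∑ j, |(T ^ k) i j| ≤ c ^ k := by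
  let _ := Matrix.linftyOpNormedRing (n := ι) (α := ℂ)
  let _ := Matrix.linftyOpNormedAlgebra (n := ι) (R := ℂ) (α := ℂ)
  have hc0 : 0 < c := (specRad_nonneg T).trans_lt hc
  have hlt : spectralRadius ℂ (T.map Complex.ofReal) < ENNReal.ofReal c :=
    (spectralRadius_map_ofReal_le T).trans_lt ((ENNReal.ofReal_lt_ofReal_iff hc0).mpr hc)
  obtain ⟨k, hk, hkc⟩ := ((Filter.eventually_ne_atTop 0).and <|
    (spectrum.pow_norm_pow_one_div_tendsto_nhds_spectralRadius _).eventually_lt_const hlt).exists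
  rw [show T.map Complex.ofReal ^ k = (T ^ k).map Complex.ofReal from
      (Matrix.map_pow T Complex.ofRealHom k).symm,
    ENNReal.ofReal_lt_ofReal_iff_of_nonneg (by positivity), one_div] at hkc
  set B : Matrix ι ι ℂ := (T ^ k).map Complex.ofReal
  have hB : ‖B‖ ≤ c ^ k := by
    have := pow_le_pow_left₀ (by positivity) hkc.le k
    rwa [Real.rpow_inv_natCast_pow (norm_nonneg B) hk] at this
  refine ⟨k, hk, fun i => le_trans (le_of_eq ?_) ((?_ : ∑ j, ‖B i j‖ ≤ ‖B‖).trans hB)⟩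
  · simp [B]
  · rw [linfty_opNorm_def]
    simpa using NNReal.coe_le_coe.mpr
      (Finset.le_sup (f := fun i => ∑ j, ‖B i j‖₊) (Finset.mem_univ i))

lemma exists_pos_mulVec_le_smul_of_specRad_lt {T : Matrix ι ι ℝ} (hT : ∀ i j, 0 ≤ T i j)
    {c : ℝ} (hc : specRad T < c) : ∃ u : ι → ℝ, (∀ i, 0 < u i) ∧ T *ᵥ u ≤ c • u := by
  have hc0 : 0 < c := (specRad_nonneg T).trans_lt hc
  obtain ⟨k, hk, hTk⟩ := exists_pow_rowSum_le_of_specRad_lt hc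
  set g : ℕ → ι → ℝ := fun l => (c⁻¹) ^ l • (T ^ l *ᵥ 1)
  have hg : ∀ l, 0 ≤ g l := fun l =>
    smul_nonneg (by positivity) (mulVec_nonneg_of_nonneg_s4 (pow_nonneg_of_nonneg hT l) zero_le_one)
  have hg0 : g 0 = 1 := by simp [g]
  have hgk : g k ≤ g 0 := fun i => by
    have : (T ^ k *ᵥ 1) i ≤ c ^ k := by
      simpa [mulVec, dotProduct, abs_of_nonneg (pow_nonneg_of_nonneg hT k _ _)] using hTk i
    simpa [g, hg0, inv_pow, inv_mul_le_iff₀ (pow_pos hc0 k)] using this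
  have hTg : ∀ l, T *ᵥ g l = c • g (l + 1) := fun l => by
    simp only [g, mulVec_smul, mulVec_mulVec, ← pow_succ', smul_smul, pow_succ]
    rw [mul_comm c, mul_assoc, inv_mul_cancel₀ hc0.ne', mul_one]
  refine ⟨∑ l ∈ Finset.range k, g l, fun i => ?_, ?_⟩
  · rw [Finset.sum_apply]
    refine lt_of_lt_of_le ?_ (Finset.single_le_sum (fun l _ => hg l i)
      (Finset.mem_range.mpr (Nat.pos_of_ne_zero hk)))
    simp [hg0]
  · -- `T u = c (u + g k - g 0)` telescopes, and `g k ≤ g 0`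
    have hshift : ∑ l ∈ Finset.range k, g (l + 1) + g 0 = ∑ l ∈ Finset.range k, g l + g k := by
      rw [← Finset.sum_range_succ', Finset.sum_range_succ]
    rw [mulVec_sum, Finset.sum_congr rfl fun l _ => hTg l, ← Finset.smul_sum]
    refine smul_le_smul_of_nonneg_left (le_of_add_le_add_right (a := g 0) ?_) hc0.le
    rw [hshift]
    gcongr

lemma specRad_le_of_forall_mulVec_le_smul {T T' : Matrix ι ι ℝ} (hT : ∀ i j, 0 ≤ T i j)
    (hT' : ∀ i j, 0 ≤ T' i j) (hT1 : specRad T < 1)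
    (h : ∀ c : ℝ, 0 ≤ c → c ≤ 1 → ∀ u : ι → ℝ, (∀ i, 0 < u i) → T *ᵥ u ≤ c • u →
      T' *ᵥ u ≤ c • u) :
    specRad T' ≤ specRad T := by
  refine le_of_forall_gt_imp_ge_of_dense fun c hc => ?_
  have hc' : specRad T < min c 1 := lt_min hc hT1
  obtain ⟨u, hu, hTu⟩ := exists_pos_mulVec_le_smul_of_specRad_lt hT hc'
  have hc0 : 0 ≤ min c 1 := (specRad_nonneg T).trans hc'.le
  exact (specRad_le_of_mulVec_le_smul hT' hu hc0 (h _ hc0 (min_le_right _ _) u hu hTu)).trans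
    (min_le_left _ _)

end SpectralRadius

section Companion

variable {n : Type*} [DecidableEq n] {H K : Matrix n n ℝ}

lemma fromBlocks_one_zero_nonneg (hH : ∀ i j, 0 ≤ H i j) (hK : ∀ i j, 0 ≤ K i j) :
    ∀ i j, 0 ≤ fromBlocks H K (1 : Matrix n n ℝ) 0 i j := by
  rintro (i | i) (j | j) <;> simp [hH, hK, one_apply, apply_ite]

lemma fromBlocks_one_zero_mulVec_le_smul_iff [Fintype n] {x y : n → ℝ} {c : ℝ} :
    fromBlocks H K 1 0 *ᵥ Sum.elim x y ≤ c • Sum.elim x y ↔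
      H *ᵥ x + K *ᵥ y ≤ c • x ∧ x ≤ c • y := by
  simp [fromBlocks_mulVec, Pi.le_def, Sum.forall]

lemma specRad_fromBlocks_lt_one [Fintype n] (hH : ∀ i j, 0 ≤ H i j) (hK : ∀ i j, 0 ≤ K i j)
    (h : ∀ w : n → ℝ, 0 ≤ w → w ≤ w ᵥ* (H + K) → w = 0) :
    specRad (fromBlocks H K 1 0) < 1 := by
  refine specRad_lt_of_forall_norm_lt one_pos fun z hz => ?_
  by_contra! hz1
  rw [fromBlocks_map, Matrix.map_one _ Complex.ofReal_zero Complex.ofReal_one,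
    Matrix.map_zero _ Complex.ofReal_zero] at hz
  obtain ⟨v, hv0, hv⟩ := exists_vecMul_eq_smul_of_mem_spectrum hz
  obtain ⟨v₁, v₂, rfl⟩ : ∃ v₁ v₂, v = Sum.elim v₁ v₂ := ⟨_, _, (Sum.elim_comp_inl_inr v).symm⟩
  have h₁ : ∀ j, (v₁ ᵥ* H.map Complex.ofReal) j + v₂ j = z * v₁ j := fun j => by
    simpa [vecMul_fromBlocks] using congrFun hv (Sum.inl j)
  have h₂ : ∀ j, (v₁ ᵥ* K.map Complex.ofReal) j = z * v₂ j := fun j => by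
    simpa [vecMul_fromBlocks] using congrFun hv (Sum.inr j)
  set w : n → ℝ := (‖v₁ ·‖)
  have hw : w ≤ w ᵥ* (H + K) := fun j => by
    have hzz : z * (z * v₁ j) =
        z * (v₁ ᵥ* H.map Complex.ofReal) j + (v₁ ᵥ* K.map Complex.ofReal) j := by
      rw [h₂, ← h₁ j]; ring
    have hnorm : ‖z‖ * (‖z‖ * w j) ≤ ‖z‖ * (w ᵥ* H) j + (w ᵥ* K) j := by
      calc ‖z‖ * (‖z‖ * w j) = ‖z * (z * v₁ j)‖ := by simp [w]
        _ ≤ ‖z‖ * ‖(v₁ ᵥ* H.map Complex.ofReal) j‖ + ‖(v₁ ᵥ* K.map Complex.ofReal) j‖ := by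
          rw [hzz, ← norm_mul]; exact norm_add_le _ _
        _ ≤ ‖z‖ * (w ᵥ* H) j + (w ᵥ* K) j := by
          gcongr
          · exact norm_vecMul_map_ofReal_le hH v₁ j
          · exact norm_vecMul_map_ofReal_le hK v₁ j
    have hwK : 0 ≤ (w ᵥ* K) j := vecMul_nonneg_of_nonneg hK (fun i => norm_nonneg _) j
    have hz : ‖z‖ * w j ≤ (w ᵥ* H) j + (w ᵥ* K) j :=
      le_of_mul_le_mul_left (a := ‖z‖) (by nlinarith [mul_nonneg (sub_nonneg.mpr hz1) hwK])
        (by linarith)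
    rw [vecMul_add, Pi.add_apply]
    linarith [le_mul_of_one_le_left (norm_nonneg (v₁ j)) hz1]
  have hv₁ : v₁ = 0 := by
    funext j; simpa [w] using congrFun (h w (fun j => norm_nonneg _) hw) j
  have hv₂ : v₂ = 0 := by
    funext j; simpa [hv₁] using h₁ j
  exact hv0 (by simp [hv₁, hv₂])

lemma specRad_fromBlocks_le [Fintype n] {H₁ H₂ M : Matrix n n ℝ} (hH₂ : ∀ i j, 0 ≤ H₂ i j)
    (hH : ∀ i j, H₂ i j ≤ H₁ i j) (hM : ∀ i j, 0 ≤ M i j) (hMK : ∀ i j, M i j ≤ K i j)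
    (hT : specRad (fromBlocks H₁ K 1 0) < 1) :
    specRad (fromBlocks (H₂ + M * H₁) (M * K) 1 0) ≤ specRad (fromBlocks H₁ K 1 0) := by
  have hH₁ : ∀ i j, 0 ≤ H₁ i j := fun i j => (hH₂ i j).trans (hH i j)
  have hK : ∀ i j, 0 ≤ K i j := fun i j => (hM i j).trans (hMK i j)
  refine specRad_le_of_forall_mulVec_le_smul (fromBlocks_one_zero_nonneg hH₁ hK)
    (fromBlocks_one_zero_nonneg (fun i j => add_nonneg (hH₂ i j) (mul_nonneg_of_nonneg hM hH₁ i j))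
      (mul_nonneg_of_nonneg hM hK)) hT fun c hc0 hc1 u hu hTu => ?_
  rw [← Sum.elim_comp_inl_inr u, fromBlocks_one_zero_mulVec_le_smul_iff] at hTu ⊢
  obtain ⟨hx, hy⟩ := hTu
  refine ⟨?_, hy⟩
  have hx0 : 0 ≤ u ∘ Sum.inl := fun i => (hu _).le
  have hy0 : 0 ≤ u ∘ Sum.inr := fun i => (hu _).le
  set x := u ∘ Sum.inl
  set y := u ∘ Sum.inr
  calc (H₂ + M * H₁) *ᵥ x + (M * K) *ᵥ y = H₂ *ᵥ x + M *ᵥ (H₁ *ᵥ x + K *ᵥ y) := by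
        rw [add_mulVec, ← mulVec_mulVec, ← mulVec_mulVec, mulVec_add, add_assoc]
    _ ≤ H₁ *ᵥ x + M *ᵥ (c • x) :=
        add_le_add (mulVec_le_mulVec_of_le hH hx0) (mulVec_le_mulVec_of_nonneg hM hx)
    _ ≤ H₁ *ᵥ x + M *ᵥ (c • c • y) :=
        add_le_add le_rfl (mulVec_le_mulVec_of_nonneg hM (smul_le_smul_of_nonneg_left hy hc0))
    _ = H₁ *ᵥ x + (c * c) • M *ᵥ y := by rw [mulVec_smul, mulVec_smul, smul_smul]
    _ ≤ H₁ *ᵥ x + M *ᵥ y :=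
        add_le_add le_rfl (smul_le_of_le_one_left (mulVec_nonneg_of_nonneg_s4 hM hy0)
          (mul_le_one₀ hc1 hc0 hc1))
    _ ≤ H₁ *ᵥ x + K *ᵥ y := add_le_add le_rfl (mulVec_le_mulVec_of_le hMK hy0)
    _ ≤ c • x := hx

end Companion

section MoorePenrose

variable {R : Type*} [CommRing R] {m n : Type*} [Fintype m] [Fintype n]

lemma mul_mul_eq_of_ker_le_s4 {A P : Matrix m n R} {X : Matrix n m R} (hP : P * X * P = P)
    (hker : LinearMap.ker P.mulVecLin ≤ LinearMap.ker A.mulVecLin) : A * X * P = A :=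
  ext_iff_mulVec.mpr fun v => by
    have : v - (X * P) *ᵥ v ∈ LinearMap.ker A.mulVecLin :=
      hker (by simp [mulVec_sub, mulVec_mulVec, ← Matrix.mul_assoc, hP])
    simpa [mulVec_sub, sub_eq_zero, mulVec_mulVec, Matrix.mul_assoc, eq_comm] using this

lemma mul_mul_eq_of_range_le_s4 {A P : Matrix m n R} {X : Matrix n m R} (hP : P * X * P = P)
    (hrange : LinearMap.range A.mulVecLin ≤ LinearMap.range P.mulVecLin) : P * X * A = A :=
  ext_iff_mulVec.mpr fun v => by
    obtain ⟨u, hu⟩ := hrange ⟨v, rfl⟩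
    rw [mulVecLin_apply, mulVecLin_apply] at hu
    rw [← mulVec_mulVec, ← hu, mulVec_mulVec, hP]

end MoorePenrose

end Matrix

section Splitting

variable {m n : ℕ}

lemma IsMP.mul_eq_of_range_eq {A P : Matrix (Fin m) (Fin n) ℝ} {XA XP : Matrix (Fin n) (Fin m) ℝ}
    (hA : IsMP A XA) (hP : IsMP P XP)
    (h : LinearMap.range P.mulVecLin = LinearMap.range A.mulVecLin) : A * XA = P * XP := by
  have hPA : P * XP * (A * XA) = A * XA := by
    rw [← Matrix.mul_assoc, mul_mul_eq_of_range_le_s4 hP.1 h.ge]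
  have hAP : A * XA * (P * XP) = P * XP := by
    rw [← Matrix.mul_assoc, mul_mul_eq_of_range_le_s4 hA.1 h.le]
  calc A * XA = (P * XP * (A * XA))ᵀ := by rw [hPA, hA.2.2.1]
    _ = P * XP := by rw [transpose_mul, hA.2.2.1, hP.2.2.1, hAP]

lemma IsMP.mul_eq_of_ker_eq {A P : Matrix (Fin m) (Fin n) ℝ} {XA XP : Matrix (Fin n) (Fin m) ℝ}
    (hA : IsMP A XA) (hP : IsMP P XP)
    (h : LinearMap.ker P.mulVecLin = LinearMap.ker A.mulVecLin) : XA * A = XP * P := by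
  have hAP : XA * A * (XP * P) = XA * A := by
    rw [Matrix.mul_assoc, ← Matrix.mul_assoc A, mul_mul_eq_of_ker_le_s4 hP.1 h.le]
  have hPA : XP * P * (XA * A) = XP * P := by
    rw [Matrix.mul_assoc, ← Matrix.mul_assoc P, mul_mul_eq_of_ker_le_s4 hA.1 h.ge]
  calc XA * A = (XA * A * (XP * P))ᵀ := by rw [hAP, hA.2.2.2]
    _ = XP * P := by rw [transpose_mul, hA.2.2.2, hP.2.2.2, hPA]

structure IsDoubleProperWeakRegularSplitting (A P R S : Matrix (Fin m) (Fin n) ℝ)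
    (X : Matrix (Fin n) (Fin m) ℝ) : Prop where
  isMP : IsMP P X
  eq_sub_add : A = P - R + S
  range_eq : LinearMap.range P.mulVecLin = LinearMap.range A.mulVecLin
  ker_eq : LinearMap.ker P.mulVecLin = LinearMap.ker A.mulVecLin
  pinv_nonneg : MatLE 0 X
  pinv_mul_nonneg : MatLE 0 (X * R)
  pinv_mul_nonpos : MatLE (X * S) 0

def iterationMatrix (X : Matrix (Fin n) (Fin m) ℝ) (R S : Matrix (Fin m) (Fin n) ℝ) :
    Matrix (Fin n ⊕ Fin n) (Fin n ⊕ Fin n) ℝ :=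
  fromBlocks (X * R) (-(X * S)) 1 0

namespace IsDoubleProperWeakRegularSplitting

variable {A P R S : Matrix (Fin m) (Fin n) ℝ} {X XA : Matrix (Fin n) (Fin m) ℝ}

lemma eq_zero_of_le_vecMul (h : IsDoubleProperWeakRegularSplitting A P R S X)
    (hXA : IsMP A XA) (hXA0 : MatLE 0 XA) {w : Fin n → ℝ} (hw0 : 0 ≤ w)
    (hw : w ≤ w ᵥ* (X * R + -(X * S))) : w = 0 := by
  have hAXA : A * XA = P * X := hXA.mul_eq_of_range_eq h.isMP h.range_eq
  have hXAA : XA * A = X * P := hXA.mul_eq_of_ker_eq h.isMP h.ker_eq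
  set y := w ᵥ* X with hy_def
  have hy0 : 0 ≤ y := vecMul_nonneg_of_nonneg h.pinv_nonneg hw0
  have hG : X * R + -(X * S) = X * P - X * A := by
    rw [h.eq_sub_add, Matrix.mul_add, Matrix.mul_sub]; abel
  have hwy : w + y ᵥ* A ≤ y ᵥ* P := by
    rw [← le_sub_iff_add_le, vecMul_vecMul, vecMul_vecMul, ← vecMul_sub, ← hG]
    exact hw
  have hyA : y ᵥ* A ᵥ* XA = y := by
    rw [vecMul_vecMul, vecMul_vecMul, hAXA, ← Matrix.mul_assoc, h.isMP.2.1]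
  have hyP : y ᵥ* P ᵥ* XA = w ᵥ* XA := by
    rw [vecMul_vecMul, vecMul_vecMul, ← Matrix.mul_assoc, ← hXAA, hXA.2.1]
  have hy : y = 0 := by
    have := vecMul_le_vecMul_of_nonneg hXA0 hwy
    rw [add_vecMul, hyA, hyP, add_le_iff_nonpos_right] at this
    exact le_antisymm this hy0
  have hGw : w ᵥ* (X * R + -(X * S)) = 0 := by
    rw [hG, vecMul_sub, ← vecMul_vecMul, ← vecMul_vecMul, ← hy_def, hy, zero_vecMul,
      zero_vecMul, sub_zero]
  exact le_antisymm (hw.trans hGw.le) hw0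

theorem specRad_iterationMatrix_lt_one (h : IsDoubleProperWeakRegularSplitting A P R S X)
    (hXA : IsMP A XA) (hXA0 : MatLE 0 XA) : specRad (iterationMatrix X R S) < 1 :=
  specRad_fromBlocks_lt_one h.pinv_mul_nonneg (fun i j => neg_nonneg.mpr (h.pinv_mul_nonpos i j))
    fun _ hw0 hw => h.eq_zero_of_le_vecMul hXA hXA0 hw0 hw

end IsDoubleProperWeakRegularSplitting

end Splitting

theorem tgads_comparison_T1_general {m n : ℕ}
    (A P₁ R₁ S₁ R₂ S₂ : Matrix (Fin m) (Fin n) ℝ)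
    (XA X₁ X₂ : Matrix (Fin n) (Fin m) ℝ)
    (hX₁ : IsMP P₁ X₁)
    (hXA : IsMP A XA)
    (hsemi : MatLE 0 XA)
    (hsplit₁ : A = P₁ - R₁ + S₁)
    (hrange₁ : LinearMap.range (P₁).mulVecLin = LinearMap.range (A).mulVecLin)
    (hker₁ : LinearMap.ker (P₁).mulVecLin = LinearMap.ker (A).mulVecLin)
    (hwr₁a : MatLE 0 X₁)
    (hwr₁b : MatLE 0 (X₁ * R₁))
    (hwr₁c : MatLE (X₁ * S₁) 0)
    (hreg₂a : MatLE 0 X₂)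
    (hreg₂b : MatLE 0 R₂)
    (hreg₂c : MatLE S₂ 0)
    (hc1 : MatLE (X₂ * R₂) (X₁ * R₁))
    (hc2 : MatLE (X₁ * S₁) (X₂ * S₂))
    : specRad (Matrix.fromBlocks (X₂ * R₂ - X₂ * S₂ * X₁ * R₁) (X₂ * S₂ * X₁ * S₁) 1 0) ≤ specRad (Matrix.fromBlocks (X₁ * R₁) (-(X₁ * S₁)) 1 0) ∧ specRad (Matrix.fromBlocks (X₁ * R₁) (-(X₁ * S₁)) 1 0) < 1 := by
  have hT₁ : specRad (iterationMatrix X₁ R₁ S₁) < 1 :=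
    IsDoubleProperWeakRegularSplitting.specRad_iterationMatrix_lt_one
      ⟨hX₁, hsplit₁, hrange₁, hker₁, hwr₁a, hwr₁b, hwr₁c⟩ hXA hsemi
  refine ⟨?_, hT₁⟩
  have hW₁ : X₂ * R₂ - X₂ * S₂ * X₁ * R₁ = X₂ * R₂ + X₂ * -S₂ * (X₁ * R₁) := by
    simp [Matrix.mul_assoc, sub_eq_add_neg, Matrix.mul_neg]
  have hW₂ : X₂ * S₂ * X₁ * S₁ = X₂ * -S₂ * -(X₁ * S₁) := by
    simp [Matrix.mul_assoc, Matrix.mul_neg]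
  have hX₂S₂ : ∀ i j, 0 ≤ (X₂ * -S₂) i j :=
    mul_nonneg_of_nonneg hreg₂a fun i j => neg_nonneg.mpr (hreg₂c i j)
  rw [hW₁, hW₂]
  exact specRad_fromBlocks_le (mul_nonneg_of_nonneg hreg₂a hreg₂b) hc1 hX₂S₂
    (fun i j => by simpa [Matrix.mul_neg] using hc2 i j) hT₁

theorem tgads_comparison_T1 {m n : ℕ}
    (A P₁ R₁ S₁ P₂ R₂ S₂ : Matrix (Fin m) (Fin n) ℝ)
    (XA X₁ X₂ Xhat : Matrix (Fin n) (Fin m) ℝ)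
    (hX₁ : IsMP P₁ X₁)
    (hX₂ : IsMP P₂ X₂)
    (hXA : IsMP A XA)
    (hsemi : MatLE 0 XA)
    (hsplit₁ : A = P₁ - R₁ + S₁)
    (hrange₁ : LinearMap.range (P₁).mulVecLin = LinearMap.range (A).mulVecLin)
    (hker₁ : LinearMap.ker (P₁).mulVecLin = LinearMap.ker (A).mulVecLin)
    (hwr₁a : MatLE 0 X₁)
    (hwr₁b : MatLE 0 (X₁ * R₁))
    (hwr₁c : MatLE (X₁ * S₁) 0)
    (hsplit₂ : A = P₂ - R₂ + S₂)
    (hrange₂ : LinearMap.range (P₂).mulVecLin = LinearMap.range (A).mulVecLin)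
    (hker₂ : LinearMap.ker (P₂).mulVecLin = LinearMap.ker (A).mulVecLin)
    (hreg₂a : MatLE 0 X₂)
    (hreg₂b : MatLE 0 R₂)
    (hreg₂c : MatLE S₂ 0)
    (hNS : LinearMap.ker (P₂).mulVecLin ≤ LinearMap.ker (S₂).mulVecLin)
    (hRS : LinearMap.range (S₂).mulVecLin ≤ LinearMap.range (P₂).mulVecLin)
    (hunit : IsUnit (1 - S₂ * X₁))
    (hXhat : IsMP ((1 - S₂ * X₁) * A) Xhat)
    (hXhatpos : MatLE 0 Xhat)
    (hc1 : MatLE (X₂ * R₂) (X₁ * R₁))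
    (hc2 : MatLE (X₁ * S₁) (X₂ * S₂))
    : specRad (Matrix.fromBlocks (X₂ * R₂ - X₂ * S₂ * X₁ * R₁) (X₂ * S₂ * X₁ * S₁) 1 0) ≤ specRad (Matrix.fromBlocks (X₁ * R₁) (-(X₁ * S₁)) 1 0) ∧ specRad (Matrix.fromBlocks (X₁ * R₁) (-(X₁ * S₁)) 1 0) < 1 :=
  tgads_comparison_T1_general A P₁ R₁ S₁ R₂ S₂ XA X₁ X₂ hX₁ hXA hsemi hsplit₁ hrange₁ hker₁ hwr₁a
    hwr₁b hwr₁c hreg₂a hreg₂b hreg₂c hc1 hc2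
end
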